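/- Multi-copy distinguishability, upper bound (unconditional form): Let ρ₀, ρ₁ be density matrices on ℂ^d, set T = (1/2)·‖ρ₀ − ρ₁‖₁, and let n ≥ 1 be a natural number. Then (1/2)·‖ρ₀^{⊗n} − ρ₁^{⊗n}‖₁ ≤ √(1 − (1 − T)^{2n}). -/

import Mathlib

/-!
Write `T = ½‖ρ - σ‖₁` and `g = Re Tr(√ρ √σ)` for the affinity. With `Δ = √ρ - √σ` and
`C = √ρ + √σ` one has `2(ρ - σ) = ΔC + CΔ`, and for density matrices `Tr Δ² = 2 - 2g`,
`Tr C² = 2 + 2g`. Pairing `ρ - σ` with its sign and applying Cauchy–Schwarz gives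
`T ≤ √(1 - g²)`; pairing it with the sign of `Δ` instead gives the Powers–Størmer bound
`Tr Δ² ≤ 2T`, i.e. `1 - T ≤ g`. The affinity is multiplicative under tensor powers, so
`Tₙ ≤ √(1 - g^(2n)) ≤ √(1 - (1 - T)^(2n))`.
-/

open Matrix BigOperators
open scoped ComplexOrder

open Classical in
noncomputable def msqrt {n : Type*} [Fintype n] [DecidableEq n] (A : Matrix n n ℂ) :
    Matrix n n ℂ :=
  if h : A.PosSemidef then
    h.1.eigenvectorUnitary.1 * diagonal ((↑) ∘ (√·) ∘ h.1.eigenvalues) *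
      (star h.1.eigenvectorUnitary : Matrix n n ℂ)
  else 0

noncomputable def traceNorm {n : Type*} [Fintype n] [DecidableEq n] (A : Matrix n n ℂ) : ℝ :=
  (msqrt (Aᴴ * A)).trace.re

noncomputable def fidelity {n : Type*} [Fintype n] [DecidableEq n] (ρ₀ ρ₁ : Matrix n n ℂ) : ℝ :=
  ((msqrt (msqrt ρ₀ * ρ₁ * msqrt ρ₀)).trace.re) ^ 2

noncomputable def tensorPow {d : ℕ} (ρ : Matrix (Fin d) (Fin d) ℂ) (n : ℕ) :
    Matrix (Fin n → Fin d) (Fin n → Fin d) ℂ :=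
  Matrix.of fun i j => ∏ k, ρ (i k) (j k)

open scoped MatrixOrder

section
variable {ι : Type*} [Fintype ι]

lemma re_trace_conjTranspose_mul_self (M : Matrix ι ι ℂ) :
    (Mᴴ * M).trace.re = ∑ p : ι × ι, ‖M p.1 p.2‖ ^ 2 := by
  rw [trace, Complex.re_sum, Fintype.sum_prod_type, Finset.sum_comm]
  refine Finset.sum_congr rfl fun i _ => ?_
  simp only [diag, mul_apply, conjTranspose_apply, Complex.re_sum]
  refine Finset.sum_congr rfl fun j _ => ?_
  rw [RCLike.star_def, mul_comm, Complex.mul_conj, Complex.normSq_eq_norm_sq, Complex.ofReal_re]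

lemma re_trace_mul_le_sqrt_mul_sqrt (M N : Matrix ι ι ℂ) :
    (M * N).trace.re ≤ √(Mᴴ * M).trace.re * √(Nᴴ * N).trace.re := by
  have hN : (Nᴴ * N).trace.re = ∑ p : ι × ι, ‖N p.2 p.1‖ ^ 2 := by
    rw [re_trace_conjTranspose_mul_self]
    exact Fintype.sum_equiv (Equiv.prodComm ι ι) _ _ fun _ => rfl
  calc (M * N).trace.re ≤ ‖(M * N).trace‖ := Complex.re_le_norm _
    _ ≤ ∑ p : ι × ι, ‖M p.1 p.2‖ * ‖N p.2 p.1‖ := by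
        rw [Fintype.sum_prod_type]
        refine (norm_sum_le _ _).trans (Finset.sum_le_sum fun i _ => ?_)
        simpa only [diag, mul_apply, norm_mul] using
          norm_sum_le Finset.univ fun j => M i j * N j i
    _ ≤ √(Mᴴ * M).trace.re * √(Nᴴ * N).trace.re := by
        rw [re_trace_conjTranspose_mul_self, hN]
        exact Real.sum_mul_le_sqrt_mul_sqrt _ _ _

lemma ofReal_re_trace_mul {A B : Matrix ι ι ℂ} (hA : IsSelfAdjoint A) (hB : IsSelfAdjoint B) :
    ((A * B).trace.re : ℂ) = (A * B).trace := by
  refine Complex.conj_eq_iff_re.mp ?_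
  rw [← Complex.star_def, ← trace_conjTranspose, conjTranspose_mul, ← star_eq_conjTranspose,
    ← star_eq_conjTranspose, hA.star_eq, hB.star_eq, trace_mul_comm]

variable [DecidableEq ι]

lemma msqrt_eq_sqrt {A : Matrix ι ι ℂ} (hA : A.PosSemidef) : msqrt A = CFC.sqrt A := by
  rw [msqrt, dif_pos hA, CFC.sqrt_eq_real_sqrt A hA.nonneg, cfcₙ_eq_cfc, hA.1.cfc_eq]
  simp [IsHermitian.cfc, Function.comp_def]

lemma traceNorm_eq_re_trace_abs (A : Matrix ι ι ℂ) : traceNorm A = (CFC.abs A).trace.re := by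
  rw [traceNorm, msqrt_eq_sqrt (posSemidef_conjTranspose_mul_self A), CFC.abs,
    star_eq_conjTranspose]

lemma re_trace_mul_nonneg {A B : Matrix ι ι ℂ} (hA : 0 ≤ A) (hB : 0 ≤ B) :
    0 ≤ (A * B).trace.re := by
  have h : (CFC.sqrt A * B * CFC.sqrt A).PosSemidef := by
    simpa [(CFC.sqrt_nonneg A).posSemidef.isHermitian.eq] using
      hB.posSemidef.mul_mul_conjTranspose_same (CFC.sqrt A)
  rw [← CFC.sqrt_mul_sqrt_self A, mul_assoc, trace_mul_comm]
  exact (Complex.nonneg_iff.mp h.trace_nonneg).1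

lemma re_trace_mul_le_traceNorm {X S : Matrix ι ι ℂ} (hX : IsSelfAdjoint X) (hS₁ : -1 ≤ S)
    (hS₂ : S ≤ 1) : (X * S).trace.re ≤ traceNorm X := by
  have hpos := re_trace_mul_nonneg (CFC.posPart_nonneg X) (sub_nonneg.mpr hS₂)
  have hneg := re_trace_mul_nonneg (CFC.negPart_nonneg X) (neg_le_iff_add_nonneg.mp hS₁)
  rw [traceNorm_eq_re_trace_abs, ← CFC.posPart_add_negPart X]
  conv_lhs => rw [← CFC.posPart_sub_negPart X]
  simp only [mul_sub, mul_add, mul_one, sub_mul, trace_sub, trace_add, Complex.sub_re,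
    Complex.add_re] at *
  linarith

lemma continuousOn_spectrum (f : ℝ → ℝ) (X : Matrix ι ι ℂ) : ContinuousOn f (spectrum ℝ X) :=
  (Set.toFinite _).continuousOn _

/-- Sending `0` to `1` makes the sign of a self-adjoint matrix an involution. -/
noncomputable def signMat (X : Matrix ι ι ℂ) : Matrix ι ι ℂ :=
  cfc (fun x : ℝ => if 0 ≤ x then 1 else -1) X

section signMat
variable {X : Matrix ι ι ℂ}

lemma isSelfAdjoint_signMat : IsSelfAdjoint (signMat X) := cfc_predicate _ _

lemma signMat_mul_self (hX : IsSelfAdjoint X) : signMat X * signMat X = 1 := by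
  rw [signMat, ← cfc_mul _ _ X (continuousOn_spectrum _ X) (continuousOn_spectrum _ X),
    ← cfc_one ℝ X]
  refine cfc_congr fun x _ => ?_
  split_ifs <;> norm_num

lemma signMat_le_one : signMat X ≤ 1 :=
  cfc_le_one _ _ fun x _ => by split_ifs <;> norm_num

lemma neg_one_le_signMat (hX : IsSelfAdjoint X) : -1 ≤ signMat X := by
  simpa [signMat] using algebraMap_le_cfc (fun x : ℝ => if 0 ≤ x then 1 else -1) (-1) X
    (fun x _ => by split_ifs <;> norm_num) (continuousOn_spectrum _ X)

lemma mul_signMat (hX : IsSelfAdjoint X) : X * signMat X = CFC.abs X := by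
  calc X * signMat X = cfc (fun x : ℝ => x * if 0 ≤ x then 1 else -1) X := by
        rw [cfc_mul _ _ X (continuousOn_spectrum _ X) (continuousOn_spectrum _ X), cfc_id' ℝ X,
          signMat]
    _ = CFC.abs X := by
        rw [CFC.abs_eq_cfc_norm X]
        refine cfc_congr fun x _ => ?_
        split_ifs with h
        · simp [abs_of_nonneg h]
        · simp [abs_of_neg (not_le.mp h)]

lemma signMat_mul (hX : IsSelfAdjoint X) : signMat X * X = CFC.abs X := by
  rw [← mul_signMat hX, signMat]
  simpa [cfc_id ℝ X] using (cfc_commute_cfc (fun x : ℝ => if 0 ≤ x then 1 else -1) id X).eq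

lemma traceNorm_eq_re_trace_mul_signMat (hX : IsSelfAdjoint X) :
    traceNorm X = (X * signMat X).trace.re := by
  rw [mul_signMat hX, traceNorm_eq_re_trace_abs]

end signMat

section squares
variable {A B : Matrix ι ι ℂ}

lemma mul_self_sub_mul_self_add_self (A B : Matrix ι ι ℂ) :
    (A * A - B * B) + (A * A - B * B) = (A - B) * (A + B) + (A + B) * (A - B) := by
  noncomm_ring

lemma traceNorm_mul_self_sub_mul_self_le_sqrt_mul_sqrt (hA : IsSelfAdjoint A)
    (hB : IsSelfAdjoint B) :
    traceNorm (A * A - B * B) ≤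
      √((A - B) * (A - B)).trace.re * √((A + B) * (A + B)).trace.re := by
  have hX : IsSelfAdjoint (A * A - B * B) := by simpa only [sq] using (hA.pow 2).sub (hB.pow 2)
  set S := signMat (A * A - B * B)
  have hS : Sᴴ = S := isSelfAdjoint_signMat
  have hS2 : S * S = 1 := signMat_mul_self hX
  have hΔ : (A - B)ᴴ = A - B := (hA.sub hB).star_eq
  have hC : (A + B)ᴴ = A + B := (hA.add hB).star_eq
  have hCS : ((A + B) * S)ᴴ * ((A + B) * S) = S * ((A + B) * (A + B)) * S := by
    rw [conjTranspose_mul, hS, hC]; noncomm_ring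
  have hSC : (S * (A + B))ᴴ * (S * (A + B)) = (A + B) * (A + B) := by
    rw [conjTranspose_mul, hS, hC, mul_assoc, ← mul_assoc S, hS2, one_mul]
  have h₁ := re_trace_mul_le_sqrt_mul_sqrt (A - B) ((A + B) * S)
  have h₂ := re_trace_mul_le_sqrt_mul_sqrt (A - B) (S * (A + B))
  rw [hCS, trace_mul_cycle, hS2, one_mul, hΔ] at h₁
  rw [hSC, hΔ] at h₂
  have hsplit : ((A * A - B * B) * S).trace + ((A * A - B * B) * S).trace =
      ((A - B) * ((A + B) * S)).trace + ((A - B) * (S * (A + B))).trace := by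
    rw [← trace_add, ← add_mul, mul_self_sub_mul_self_add_self, add_mul, trace_add,
      mul_assoc (A + B), trace_mul_comm (A + B), mul_assoc, mul_assoc]
  have := congrArg Complex.re hsplit
  simp only [Complex.add_re] at this
  rw [traceNorm_eq_re_trace_mul_signMat hX]
  linarith

/-- The Powers–Størmer inequality. -/
lemma re_trace_sub_mul_self_le_traceNorm (hA : 0 ≤ A) (hB : 0 ≤ B) :
    ((A - B) * (A - B)).trace.re ≤ traceNorm (A * A - B * B) := by
  have hΔ : IsSelfAdjoint (A - B) := hA.isSelfAdjoint.sub hB.isSelfAdjoint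
  have hX : IsSelfAdjoint (A * A - B * B) := by
    simpa only [sq] using (hA.isSelfAdjoint.pow 2).sub (hB.isSelfAdjoint.pow 2)
  set S := signMat (A - B)
  set D := CFC.abs (A - B)
  -- `Tr (A - B)² ≤ Tr ((A + B) |A - B|)` since `|A - B| ∓ (A - B) ≥ 0`, and the right side is
  -- `Tr ((A² - B²) S)` because `S` commutes with `A - B` and `(A - B) S = |A - B|`.
  have hA' := re_trace_mul_nonneg hA (show 0 ≤ D - (A - B) by
    rw [CFC.abs_sub_self _ hΔ]; exact smul_nonneg zero_le_two (CFC.negPart_nonneg _))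
  have hB' := re_trace_mul_nonneg hB (show 0 ≤ D + (A - B) by
    rw [CFC.abs_add_self _ hΔ]; exact smul_nonneg zero_le_two (CFC.posPart_nonneg _))
  have hsplit : ((A * A - B * B) * S).trace + ((A * A - B * B) * S).trace =
      ((A + B) * D).trace + ((A + B) * D).trace := by
    rw [← trace_add, ← add_mul, mul_self_sub_mul_self_add_self, add_mul, trace_add,
      mul_assoc, trace_mul_comm, mul_assoc, signMat_mul hΔ, mul_assoc, mul_signMat hΔ]
  have hS : ((A * A - B * B) * S).trace.re ≤ traceNorm (A * A - B * B) :=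
    re_trace_mul_le_traceNorm hX (neg_one_le_signMat hΔ) signMat_le_one
  have hBA := congrArg Complex.re (trace_mul_comm B A)
  have := congrArg Complex.re hsplit
  simp only [mul_add, add_mul, mul_sub, sub_mul, trace_add, trace_sub, Complex.add_re,
    Complex.sub_re] at hA' hB' hS this ⊢
  linarith

end squares

noncomputable def affinity (ρ σ : Matrix ι ι ℂ) : ℝ := (CFC.sqrt ρ * CFC.sqrt σ).trace.re

section affinity
variable {ρ σ : Matrix ι ι ℂ}

lemma affinity_nonneg : 0 ≤ affinity ρ σ :=
  re_trace_mul_nonneg (CFC.sqrt_nonneg ρ) (CFC.sqrt_nonneg σ)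

lemma re_trace_sqrt_sub_sqrt_mul_self (hρ : 0 ≤ ρ) (hσ : 0 ≤ σ) (hρ₁ : ρ.trace = 1)
    (hσ₁ : σ.trace = 1) :
    ((CFC.sqrt ρ - CFC.sqrt σ) * (CFC.sqrt ρ - CFC.sqrt σ)).trace.re = 2 - 2 * affinity ρ σ := by
  have hcomm := congrArg Complex.re (trace_mul_comm (CFC.sqrt σ) (CFC.sqrt ρ))
  simp only [mul_sub, sub_mul, CFC.sqrt_mul_sqrt_self ρ hρ, CFC.sqrt_mul_sqrt_self σ hσ,
    trace_sub, Complex.sub_re, hρ₁, hσ₁, Complex.one_re, hcomm, affinity]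
  ring

lemma re_trace_sqrt_add_sqrt_mul_self (hρ : 0 ≤ ρ) (hσ : 0 ≤ σ) (hρ₁ : ρ.trace = 1)
    (hσ₁ : σ.trace = 1) :
    ((CFC.sqrt ρ + CFC.sqrt σ) * (CFC.sqrt ρ + CFC.sqrt σ)).trace.re = 2 + 2 * affinity ρ σ := by
  have hcomm := congrArg Complex.re (trace_mul_comm (CFC.sqrt σ) (CFC.sqrt ρ))
  simp only [mul_add, add_mul, CFC.sqrt_mul_sqrt_self ρ hρ, CFC.sqrt_mul_sqrt_self σ hσ,
    trace_add, Complex.add_re, hρ₁, hσ₁, Complex.one_re, hcomm, affinity]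
  ring

lemma half_traceNorm_sub_le_sqrt_one_sub_affinity_sq (hρ : 0 ≤ ρ) (hσ : 0 ≤ σ)
    (hρ₁ : ρ.trace = 1) (hσ₁ : σ.trace = 1) :
    1 / 2 * traceNorm (ρ - σ) ≤ √(1 - affinity ρ σ ^ 2) := by
  have h := traceNorm_mul_self_sub_mul_self_le_sqrt_mul_sqrt
    (CFC.sqrt_nonneg ρ).isSelfAdjoint (CFC.sqrt_nonneg σ).isSelfAdjoint
  rw [CFC.sqrt_mul_sqrt_self ρ hρ, CFC.sqrt_mul_sqrt_self σ hσ,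
    re_trace_sqrt_sub_sqrt_mul_self hρ hσ hρ₁ hσ₁, re_trace_sqrt_add_sqrt_mul_self hρ hσ hρ₁ hσ₁,
    ← Real.sqrt_mul' _ (by linarith [affinity_nonneg (ρ := ρ) (σ := σ)]),
    show (2 - 2 * affinity ρ σ) * (2 + 2 * affinity ρ σ) = 2 ^ 2 * (1 - affinity ρ σ ^ 2) by ring,
    Real.sqrt_mul (by norm_num), Real.sqrt_sq (by norm_num)] at h
  linarith

lemma one_sub_affinity_le_half_traceNorm_sub (hρ : 0 ≤ ρ) (hσ : 0 ≤ σ) (hρ₁ : ρ.trace = 1)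
    (hσ₁ : σ.trace = 1) : 1 - affinity ρ σ ≤ 1 / 2 * traceNorm (ρ - σ) := by
  have h := re_trace_sub_mul_self_le_traceNorm (CFC.sqrt_nonneg ρ) (CFC.sqrt_nonneg σ)
  rw [CFC.sqrt_mul_sqrt_self ρ hρ, CFC.sqrt_mul_sqrt_self σ hσ,
    re_trace_sqrt_sub_sqrt_mul_self hρ hσ hρ₁ hσ₁] at h
  linarith

lemma sq_one_sub_half_traceNorm_sub_le_affinity_sq (hρ : 0 ≤ ρ) (hσ : 0 ≤ σ)
    (hρ₁ : ρ.trace = 1) (hσ₁ : σ.trace = 1) :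
    (1 - 1 / 2 * traceNorm (ρ - σ)) ^ 2 ≤ affinity ρ σ ^ 2 := by
  have hg : 0 ≤ affinity ρ σ := affinity_nonneg
  have hupper := half_traceNorm_sub_le_sqrt_one_sub_affinity_sq hρ hσ hρ₁ hσ₁
  have hlower := one_sub_affinity_le_half_traceNorm_sub hρ hσ hρ₁ hσ₁
  have hle_one : 1 / 2 * traceNorm (ρ - σ) ≤ 1 :=
    hupper.trans (Real.sqrt_le_one.mpr (by nlinarith))
  exact sq_le_sq' (by linarith) (by linarith)

end affinity

end

section tensorPow
variable {d n : ℕ}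

lemma tensorPow_mul (A B : Matrix (Fin d) (Fin d) ℂ) :
    tensorPow A n * tensorPow B n = tensorPow (A * B) n := by
  ext i j
  simp only [tensorPow, mul_apply, of_apply, Fintype.prod_sum, Finset.prod_mul_distrib]

lemma conjTranspose_tensorPow (A : Matrix (Fin d) (Fin d) ℂ) :
    (tensorPow A n)ᴴ = tensorPow Aᴴ n := by
  ext i j
  simp [tensorPow, star_prod]

lemma trace_tensorPow (A : Matrix (Fin d) (Fin d) ℂ) : (tensorPow A n).trace = A.trace ^ n := by
  simp [trace, tensorPow, Fintype.sum_pow]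

lemma tensorPow_nonneg {A : Matrix (Fin d) (Fin d) ℂ} (hA : 0 ≤ A) : 0 ≤ tensorPow A n := by
  have h : tensorPow A n = star (tensorPow (CFC.sqrt A) n) * tensorPow (CFC.sqrt A) n := by
    rw [star_eq_conjTranspose, conjTranspose_tensorPow, ← star_eq_conjTranspose,
      (CFC.sqrt_nonneg A).isSelfAdjoint.star_eq, tensorPow_mul, CFC.sqrt_mul_sqrt_self A hA]
  rw [h]
  exact star_mul_self_nonneg _

lemma sqrt_tensorPow {A : Matrix (Fin d) (Fin d) ℂ} (hA : 0 ≤ A) :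
    CFC.sqrt (tensorPow A n) = tensorPow (CFC.sqrt A) n :=
  CFC.sqrt_unique (by rw [tensorPow_mul, CFC.sqrt_mul_sqrt_self A hA])
    (tensorPow_nonneg (CFC.sqrt_nonneg A))

lemma affinity_tensorPow {ρ σ : Matrix (Fin d) (Fin d) ℂ} (hρ : 0 ≤ ρ) (hσ : 0 ≤ σ) :
    affinity (tensorPow ρ n) (tensorPow σ n) = affinity ρ σ ^ n := by
  rw [affinity, sqrt_tensorPow hρ, sqrt_tensorPow hσ, tensorPow_mul, trace_tensorPow,
    ← ofReal_re_trace_mul (CFC.sqrt_nonneg ρ).isSelfAdjoint (CFC.sqrt_nonneg σ).isSelfAdjoint,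
    ← Complex.ofReal_pow, Complex.ofReal_re, affinity]

end tensorPow

theorem multi_copy_distinguishability_upper_general {d : ℕ} (ρ₀ ρ₁ : Matrix (Fin d) (Fin d) ℂ)
    (hρ₀ : ρ₀.PosSemidef) (hρ₀t : ρ₀.trace = 1)
    (hρ₁ : ρ₁.PosSemidef) (hρ₁t : ρ₁.trace = 1)
    (n : ℕ) :
    (1 / 2) * traceNorm (tensorPow ρ₀ n - tensorPow ρ₁ n) ≤
      Real.sqrt (1 - (1 - (1 / 2) * traceNorm (ρ₀ - ρ₁)) ^ (2 * n)) := by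
  have hcopies := half_traceNorm_sub_le_sqrt_one_sub_affinity_sq
    (tensorPow_nonneg (n := n) hρ₀.nonneg) (tensorPow_nonneg hρ₁.nonneg)
    (by rw [trace_tensorPow, hρ₀t, one_pow]) (by rw [trace_tensorPow, hρ₁t, one_pow])
  rw [affinity_tensorPow hρ₀.nonneg hρ₁.nonneg, ← pow_mul, mul_comm n 2, pow_mul] at hcopies
  refine hcopies.trans (Real.sqrt_le_sqrt (sub_le_sub_left ?_ 1))
  rw [pow_mul]
  exact pow_le_pow_left₀ (sq_nonneg _)
    (sq_one_sub_half_traceNorm_sub_le_affinity_sq hρ₀.nonneg hρ₁.nonneg hρ₀t hρ₁t) n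

/-- Multi-copy distinguishability, upper bound (unconditional form). -/
theorem multi_copy_distinguishability_upper {d : ℕ} (ρ₀ ρ₁ : Matrix (Fin d) (Fin d) ℂ)
    (hρ₀ : ρ₀.PosSemidef) (hρ₀t : ρ₀.trace = 1)
    (hρ₁ : ρ₁.PosSemidef) (hρ₁t : ρ₁.trace = 1)
    (n : ℕ) (hn : 1 ≤ n) :
    (1 / 2) * traceNorm (tensorPow ρ₀ n - tensorPow ρ₁ n) ≤
      Real.sqrt (1 - (1 - (1 / 2) * traceNorm (ρ₀ - ρ₁)) ^ (2 * n)) :=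
  multi_copy_distinguishability_upper_general ρ₀ ρ₁ hρ₀ hρ₀t hρ₁ hρ₁t n
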